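/- Let G be a connected strongly regular graph with parameters (n,d,0,c), where d ≥ 3 and c > 0, such that G is irreducible (distinct vertices have distinct neighborhoods), and let D be the distance matrix of the bipartite double cover B(G). Set Δ = c² + 4(d-c), λ₁ = (-c + √Δ)/2 and λ₂ = (-c - √Δ)/2. Then every real eigenvalue μ of D (i.e., every μ ∈ ℝ for which there exists a nonzero real vector u with D·u = μ·u) belongs to the set {5n, 4λ₁ - 4, 4λ₂ - 4, 0, 4d - n - 4}. -/

import Mathlib

open SimpleGraph

/-- The bipartite double cover of a graph `G`, on vertex set `V ⊕ V`. -/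
def bipartiteDoubleCover {V : Type*} (G : SimpleGraph V) : SimpleGraph (V ⊕ V) where
  Adj x y :=
    match x, y with
    | Sum.inl u, Sum.inr v => G.Adj u v
    | Sum.inr u, Sum.inl v => G.Adj u v
    | _, _ => False
  symm := ⟨by
    rintro (u | u) (v | v) h
    · exact h.elim
    · exact h.symm
    · exact h.symm
    · exact h.elim⟩
  loopless := ⟨by
    rintro (u | u) h
    · exact h
    · exact h⟩

/-- The distance matrix of a graph `H`, over the reals. -/
noncomputable def distMatrix {W : Type*} (H : SimpleGraph W) : Matrix W W ℝ :=
  Matrix.of fun x y => (H.dist x y : ℝ)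

set_option linter.unusedSectionVars false
set_option maxHeartbeats 1000000

section Aux2
variable {V : Type*} (G : SimpleGraph V)

lemma bdc_adj_lr {u v : V} : (_root_.bipartiteDoubleCover G).Adj (Sum.inl u) (Sum.inr v) ↔ G.Adj u v :=
  Iff.rfl

lemma bdc_adj_rl {u v : V} : (_root_.bipartiteDoubleCover G).Adj (Sum.inr u) (Sum.inl v) ↔ G.Adj u v :=
  Iff.rfl

lemma bdc_not_adj_ll {u v : V} : ¬ (_root_.bipartiteDoubleCover G).Adj (Sum.inl u) (Sum.inl v) :=
  fun h => h

lemma bdc_not_adj_rr {u v : V} : ¬ (_root_.bipartiteDoubleCover G).Adj (Sum.inr u) (Sum.inr v) :=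
  fun h => h

def bdcSide : V ⊕ V → ZMod 2 := Sum.elim (fun _ => 0) (fun _ => 1)

lemma bdc_parity {a b : V ⊕ V} (p : (_root_.bipartiteDoubleCover G).Walk a b) :
    (p.length : ZMod 2) = bdcSide a + bdcSide b := by
  induction p with
  | nil =>
    rename_i x
    rcases x with x | x <;> simp [bdcSide] <;> decide
  | cons h q ih =>
    rename_i x y z
    rw [Walk.length_cons]
    push_cast
    rw [ih]
    have : bdcSide y + 1 = bdcSide (V := V) x := by
      rcases x with x | x <;> rcases y with y | y
      · exact absurd h (bdc_not_adj_ll G)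
      · simp [bdcSide]; decide
      · simp [bdcSide]
      · exact absurd h (bdc_not_adj_rr G)
    rw [← this]; ring

lemma bdc_even_ll {u v : V} (p : (_root_.bipartiteDoubleCover G).Walk (Sum.inl u) (Sum.inl v)) :
    Even p.length := by
  have := bdc_parity G p
  simp [bdcSide] at this
  rw [Nat.even_iff, ← Nat.dvd_iff_mod_eq_zero]
  exact (ZMod.natCast_eq_zero_iff _ 2).mp this

lemma bdc_odd_lr {u v : V} (p : (_root_.bipartiteDoubleCover G).Walk (Sum.inl u) (Sum.inr v)) :
    ¬ Even p.length := by
  intro he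
  have h1 := bdc_parity G p
  simp [bdcSide] at h1
  have : ((p.length : ℕ) : ZMod 2) = 0 := by
    rw [ZMod.natCast_eq_zero_iff]
    exact he.two_dvd
  rw [this] at h1
  exact zero_ne_one h1

end Aux2

section Aux
variable {V : Type*} [Fintype V] [DecidableEq V] {G : SimpleGraph V} [DecidableRel G.Adj]
  {n d c : ℕ}

lemma triFree (hsrg : G.IsSRGWith n d 0 c) {u v w : V}
    (huv : G.Adj u v) (huw : G.Adj u w) (hvw : G.Adj v w) : False := by
  have h0 := hsrg.of_adj u v huv
  have hw : w ∈ G.commonNeighbors u v := ⟨huw, hvw⟩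
  have := Fintype.card_eq_zero_iff.mp h0
  exact this.false ⟨w, hw⟩

lemma exCommon (hsrg : G.IsSRGWith n d 0 c) (hc : 0 < c) {u v : V}
    (hne : u ≠ v) (hna : ¬ G.Adj u v) : ∃ x, G.Adj u x ∧ G.Adj v x := by
  have h := hsrg.of_not_adj hne hna
  have : 0 < Fintype.card (G.commonNeighbors u v) := h ▸ hc
  obtain ⟨⟨x, hx⟩⟩ := Fintype.card_pos_iff.mp this
  exact ⟨x, hx.1, hx.2⟩

lemma commonFinset (u w : V) :
    (G.commonNeighbors u w).toFinset = G.neighborFinset u ∩ G.neighborFinset w := by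
  ext x; rw [Set.mem_toFinset, Finset.mem_inter, mem_neighborFinset, mem_neighborFinset]
  exact Iff.rfl

lemma cardCommon (hsrg : G.IsSRGWith n d 0 c) {u v : V} (hne : u ≠ v) (hna : ¬ G.Adj u v) :
    (G.neighborFinset u ∩ G.neighborFinset v).card = c := by
  rw [← commonFinset, Set.toFinset_card]
  exact hsrg.of_not_adj hne hna

lemma cardCommonAdj (hsrg : G.IsSRGWith n d 0 c) {u v : V} (ha : G.Adj u v) :
    (G.neighborFinset u ∩ G.neighborFinset v).card = 0 := by
  rw [← commonFinset, Set.toFinset_card]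
  exact hsrg.of_adj u v ha

lemma cLtD (hsrg : G.IsSRGWith n d 0 c) (hconn : G.Connected) (hd : 3 ≤ d)
    (hirr : ∀ v w : V, G.neighborSet v = G.neighborSet w → v = w) : c < d := by
  obtain ⟨u⟩ := hconn.nonempty
  have hcard : (G.neighborFinset u).card = d := by
    simpa using hsrg.regular u
  have h2 : 1 < (G.neighborFinset u).card := by omega
  obtain ⟨a, ha, b, hb, hab⟩ := Finset.one_lt_card.mp h2
  rw [mem_neighborFinset] at ha hb
  have hnab : ¬ G.Adj a b := fun h => triFree hsrg ha hb h
  have hcc : (G.neighborFinset a ∩ G.neighborFinset b).card = c :=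
    cardCommon hsrg hab hnab
  have hsub : G.neighborFinset a ∩ G.neighborFinset b ⊆ G.neighborFinset a :=
    Finset.inter_subset_left
  have hda : (G.neighborFinset a).card = d := by simpa using hsrg.regular a
  have hle : c ≤ d := by
    rw [← hcc, ← hda]; exact Finset.card_le_card hsub
  rcases lt_or_eq_of_le hle with h | h
  · exact h
  · exfalso
    have heqa : G.neighborFinset a ∩ G.neighborFinset b = G.neighborFinset a :=
      Finset.eq_of_subset_of_card_le hsub (by omega)
    have hsub' : G.neighborFinset a ∩ G.neighborFinset b ⊆ G.neighborFinset b :=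
      Finset.inter_subset_right
    have hdb : (G.neighborFinset b).card = d := by simpa using hsrg.regular b
    have heqb : G.neighborFinset a ∩ G.neighborFinset b = G.neighborFinset b :=
      Finset.eq_of_subset_of_card_le hsub' (by omega)
    apply hab
    apply hirr
    have h3 : G.neighborFinset a = G.neighborFinset b := by rw [← heqa, heqb]
    have h4 := congrArg (fun s : Finset V => (s : Set V)) h3
    simpa [neighborFinset_def] using h4

lemma nBig (hsrg : G.IsSRGWith n d 0 c) (hconn : G.Connected) (hd : 3 ≤ d) (hc : 0 < c)
    (hirr : ∀ v w : V, G.neighborSet v = G.neighborSet w → v = w) : 2 * d < n := by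
  have hn0 : 0 < n := by
    rw [← hsrg.card]
    have := hconn.nonempty
    exact Fintype.card_pos
  have hpe := SimpleGraph.IsSRGWith.param_eq G hsrg hn0
  have hcd : c < d := cLtD hsrg hconn hd hirr
  have h1 : d * c ≤ (n - d - 1) * c := by
    calc d * c ≤ d * (d - 0 - 1) := Nat.mul_le_mul_left d (by omega)
    _ = (n - d - 1) * c := hpe
  have h2 : d ≤ n - d - 1 := Nat.le_of_mul_le_mul_right h1 hc
  omega

lemma exNonadj (hsrg : G.IsSRGWith n d 0 c) (hconn : G.Connected) (hd : 3 ≤ d) (hc : 0 < c)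
    (hirr : ∀ v w : V, G.neighborSet v = G.neighborSet w → v = w) {u v : V} (h : G.Adj u v) :
    ∃ w, ¬ G.Adj u w ∧ ¬ G.Adj v w ∧ u ≠ w ∧ v ≠ w := by
  have hcu : (G.neighborFinset u ∪ G.neighborFinset v).card ≤ 2 * d := by
    calc (G.neighborFinset u ∪ G.neighborFinset v).card
        ≤ (G.neighborFinset u).card + (G.neighborFinset v).card := Finset.card_union_le _ _
    _ = 2 * d := by
      have h1 : (G.neighborFinset u).card = d := by simpa using hsrg.regular u
      have h2 : (G.neighborFinset v).card = d := by simpa using hsrg.regular v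
      omega
  have hn : 2 * d < n := nBig hsrg hconn hd hc hirr
  have : ∃ w, w ∉ G.neighborFinset u ∪ G.neighborFinset v := by
    by_contra hcontra
    push_neg at hcontra
    have : (Finset.univ : Finset V) = G.neighborFinset u ∪ G.neighborFinset v :=
      (Finset.eq_univ_iff_forall.mpr hcontra).symm
    have hcc := congrArg Finset.card this
    rw [Finset.card_univ, hsrg.card] at hcc
    omega
  obtain ⟨w, hw⟩ := this
  simp only [Finset.mem_union, mem_neighborFinset, not_or] at hw
  refine ⟨w, hw.1, hw.2, ?_, ?_⟩
  · rintro rfl; exact hw.2 h.symm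
  · rintro rfl; exact hw.1 h

lemma ex4walk (hsrg : G.IsSRGWith n d 0 c) (hconn : G.Connected) (hd : 3 ≤ d) (hc : 0 < c)
    (hirr : ∀ v w : V, G.neighborSet v = G.neighborSet w → v = w) {u v : V} (h : G.Adj u v) :
    ∃ x w z, G.Adj u x ∧ G.Adj x w ∧ G.Adj w z ∧ G.Adj z v := by
  obtain ⟨w, hu, hv, hne1, hne2⟩ := exNonadj hsrg hconn hd hc hirr h
  obtain ⟨x, hx1, hx2⟩ := exCommon hsrg hc hne1 hu
  obtain ⟨z, hz1, hz2⟩ := exCommon hsrg hc hne2 hv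
  exact ⟨x, w, z, hx1, hx2.symm, hz2, hz1.symm⟩

lemma ex3walk (hsrg : G.IsSRGWith n d 0 c) (hconn : G.Connected) (hd : 3 ≤ d) (hc : 0 < c)
    (hirr : ∀ v w : V, G.neighborSet v = G.neighborSet w → v = w) {u v : V}
    (hne : u ≠ v) (hna : ¬ G.Adj u v) :
    ∃ x y, G.Adj u x ∧ G.Adj x y ∧ G.Adj y v := by
  have hcd : c < d := cLtD hsrg hconn hd hirr
  have hcc : (G.neighborFinset u ∩ G.neighborFinset v).card = c := cardCommon hsrg hne hna
  have hdu : (G.neighborFinset u).card = d := by simpa using hsrg.regular u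
  have : ((G.neighborFinset u) \ (G.neighborFinset v)).Nonempty := by
    rw [← Finset.card_pos]
    have hia := Finset.card_inter_add_card_sdiff (G.neighborFinset u) (G.neighborFinset v)
    omega
  obtain ⟨x, hx⟩ := this
  rw [Finset.mem_sdiff, mem_neighborFinset, mem_neighborFinset] at hx
  have hxv : x ≠ v := by rintro rfl; exact hna hx.1
  obtain ⟨y, hy1, hy2⟩ := exCommon hsrg hc hxv (fun h => hx.2 h.symm)
  exact ⟨x, y, hx.1, hy1, hy2.symm⟩

end Aux

section Dist
variable {V : Type*} [Fintype V] [DecidableEq V] {G : SimpleGraph V} [DecidableRel G.Adj]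
  {n d c : ℕ}

lemma bdc_even_rr {V : Type*} (G : SimpleGraph V) {u v : V}
    (p : (_root_.bipartiteDoubleCover G).Walk (Sum.inr u) (Sum.inr v)) :
    Even p.length := by
  have := bdc_parity G p
  simp [bdcSide] at this
  rw [Nat.even_iff, ← Nat.dvd_iff_mod_eq_zero]
  have h2 : ((p.length : ℕ) : ZMod 2) = 0 := by rw [this]; decide
  exact (ZMod.natCast_eq_zero_iff _ 2).mp h2

lemma dist_lr_adj {u v : V} (h : G.Adj u v) :
    (_root_.bipartiteDoubleCover G).dist (Sum.inl u) (Sum.inr v) = 1 :=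
  SimpleGraph.dist_eq_one_iff_adj.mpr ((bdc_adj_lr G).mpr h)

lemma dist_ll_two (hsrg : G.IsSRGWith n d 0 c) (hc : 0 < c) {u v : V}
    (hne : u ≠ v) (hna : ¬ G.Adj u v) :
    (_root_.bipartiteDoubleCover G).dist (Sum.inl u) (Sum.inl v) = 2 := by
  obtain ⟨x, hux, hvx⟩ := exCommon hsrg hc hne hna
  let p : (_root_.bipartiteDoubleCover G).Walk (Sum.inl u) (Sum.inl v) :=
    Walk.cons ((bdc_adj_lr G).mpr hux) (Walk.cons ((bdc_adj_rl G).mpr hvx.symm) Walk.nil)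
  have hle : (_root_.bipartiteDoubleCover G).dist (Sum.inl u) (Sum.inl v) ≤ 2 := by
    have := SimpleGraph.dist_le p
    simpa [p] using this
  have hr : (_root_.bipartiteDoubleCover G).Reachable (Sum.inl u) (Sum.inl v) := ⟨p⟩
  have h0 : (_root_.bipartiteDoubleCover G).dist (Sum.inl u) (Sum.inl v) ≠ 0 := by
    intro h
    have := hr.dist_eq_zero_iff.mp h
    simp at this
    exact hne this
  have h1 : (_root_.bipartiteDoubleCover G).dist (Sum.inl u) (Sum.inl v) ≠ 1 := by
    intro h
    exact bdc_not_adj_ll G (SimpleGraph.dist_eq_one_iff_adj.mp h)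
  omega

lemma dist_rr_two (hsrg : G.IsSRGWith n d 0 c) (hc : 0 < c) {u v : V}
    (hne : u ≠ v) (hna : ¬ G.Adj u v) :
    (_root_.bipartiteDoubleCover G).dist (Sum.inr u) (Sum.inr v) = 2 := by
  obtain ⟨x, hux, hvx⟩ := exCommon hsrg hc hne hna
  let p : (_root_.bipartiteDoubleCover G).Walk (Sum.inr u) (Sum.inr v) :=
    Walk.cons ((bdc_adj_rl G).mpr hux) (Walk.cons ((bdc_adj_lr G).mpr hvx.symm) Walk.nil)
  have hle : (_root_.bipartiteDoubleCover G).dist (Sum.inr u) (Sum.inr v) ≤ 2 := by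
    have := SimpleGraph.dist_le p
    simpa [p] using this
  have hr : (_root_.bipartiteDoubleCover G).Reachable (Sum.inr u) (Sum.inr v) := ⟨p⟩
  have h0 : (_root_.bipartiteDoubleCover G).dist (Sum.inr u) (Sum.inr v) ≠ 0 := by
    intro h
    have := hr.dist_eq_zero_iff.mp h
    simp at this
    exact hne this
  have h1 : (_root_.bipartiteDoubleCover G).dist (Sum.inr u) (Sum.inr v) ≠ 1 := by
    intro h
    exact bdc_not_adj_rr G (SimpleGraph.dist_eq_one_iff_adj.mp h)
  omega

lemma dist_ll_adj (hsrg : G.IsSRGWith n d 0 c) (hconn : G.Connected) (hd : 3 ≤ d) (hc : 0 < c)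
    (hirr : ∀ v w : V, G.neighborSet v = G.neighborSet w → v = w) {u v : V} (h : G.Adj u v) :
    (_root_.bipartiteDoubleCover G).dist (Sum.inl u) (Sum.inl v) = 4 := by
  obtain ⟨x, w, z, h1, h2, h3, h4⟩ := ex4walk hsrg hconn hd hc hirr h
  let p : (_root_.bipartiteDoubleCover G).Walk (Sum.inl u) (Sum.inl v) :=
    Walk.cons ((bdc_adj_lr G).mpr h1) (Walk.cons ((bdc_adj_rl G).mpr h2)
      (Walk.cons ((bdc_adj_lr G).mpr h3) (Walk.cons ((bdc_adj_rl G).mpr h4) Walk.nil)))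
  have hle : (_root_.bipartiteDoubleCover G).dist (Sum.inl u) (Sum.inl v) ≤ 4 := by
    have := SimpleGraph.dist_le p
    simpa [p] using this
  have hr : (_root_.bipartiteDoubleCover G).Reachable (Sum.inl u) (Sum.inl v) := ⟨p⟩
  obtain ⟨q, hq⟩ := hr.exists_walk_length_eq_dist
  have heven : Even q.length := bdc_even_ll G q
  have h0 : (_root_.bipartiteDoubleCover G).dist (Sum.inl u) (Sum.inl v) ≠ 0 := by
    intro h'
    have := hr.dist_eq_zero_iff.mp h'
    simp at this
    exact h.ne this
  have hne2 : (_root_.bipartiteDoubleCover G).dist (Sum.inl u) (Sum.inl v) ≠ 2 := by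
    intro h'
    rw [h'] at hq
    have ha1 := q.adj_getVert_succ (i := 0) (by omega)
    have ha2 := q.adj_getVert_succ (i := 1) (by omega)
    rw [q.getVert_zero] at ha1
    have hgl : q.getVert 2 = Sum.inl v := by
      have := q.getVert_length
      rwa [hq] at this
    rw [hgl] at ha2
    rcases hm : q.getVert 1 with x' | x'
    · rw [hm] at ha1
      exact bdc_not_adj_ll G ha1
    · rw [hm] at ha1 ha2
      have hux' : G.Adj u x' := (bdc_adj_lr G).mp ha1
      have hx'v : G.Adj x' v := (bdc_adj_rl G).mp ha2
      exact triFree hsrg h hux' hx'v.symm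
  obtain ⟨m, hm⟩ := heven
  omega

lemma dist_rr_adj (hsrg : G.IsSRGWith n d 0 c) (hconn : G.Connected) (hd : 3 ≤ d) (hc : 0 < c)
    (hirr : ∀ v w : V, G.neighborSet v = G.neighborSet w → v = w) {u v : V} (h : G.Adj u v) :
    (_root_.bipartiteDoubleCover G).dist (Sum.inr u) (Sum.inr v) = 4 := by
  obtain ⟨x, w, z, h1, h2, h3, h4⟩ := ex4walk hsrg hconn hd hc hirr h
  let p : (_root_.bipartiteDoubleCover G).Walk (Sum.inr u) (Sum.inr v) :=
    Walk.cons ((bdc_adj_rl G).mpr h1) (Walk.cons ((bdc_adj_lr G).mpr h2)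
      (Walk.cons ((bdc_adj_rl G).mpr h3) (Walk.cons ((bdc_adj_lr G).mpr h4) Walk.nil)))
  have hle : (_root_.bipartiteDoubleCover G).dist (Sum.inr u) (Sum.inr v) ≤ 4 := by
    have := SimpleGraph.dist_le p
    simpa [p] using this
  have hr : (_root_.bipartiteDoubleCover G).Reachable (Sum.inr u) (Sum.inr v) := ⟨p⟩
  obtain ⟨q, hq⟩ := hr.exists_walk_length_eq_dist
  have heven : Even q.length := bdc_even_rr G q
  have h0 : (_root_.bipartiteDoubleCover G).dist (Sum.inr u) (Sum.inr v) ≠ 0 := by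
    intro h'
    have := hr.dist_eq_zero_iff.mp h'
    simp at this
    exact h.ne this
  have hne2 : (_root_.bipartiteDoubleCover G).dist (Sum.inr u) (Sum.inr v) ≠ 2 := by
    intro h'
    rw [h'] at hq
    have ha1 := q.adj_getVert_succ (i := 0) (by omega)
    have ha2 := q.adj_getVert_succ (i := 1) (by omega)
    rw [q.getVert_zero] at ha1
    have hgl : q.getVert 2 = Sum.inr v := by
      have := q.getVert_length
      rwa [hq] at this
    rw [hgl] at ha2
    rcases hm : q.getVert 1 with x' | x'
    · rw [hm] at ha1 ha2
      have hux' : G.Adj u x' := (bdc_adj_rl G).mp ha1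
      have hx'v : G.Adj x' v := (bdc_adj_lr G).mp ha2
      exact triFree hsrg h hux' hx'v.symm
    · rw [hm] at ha1
      exact bdc_not_adj_rr G ha1
  obtain ⟨m, hm⟩ := heven
  omega

lemma dist_lr_nonadj (hsrg : G.IsSRGWith n d 0 c) (hconn : G.Connected) (hd : 3 ≤ d) (hc : 0 < c)
    (hirr : ∀ v w : V, G.neighborSet v = G.neighborSet w → v = w) {u v : V}
    (hne : u ≠ v) (hna : ¬ G.Adj u v) :
    (_root_.bipartiteDoubleCover G).dist (Sum.inl u) (Sum.inr v) = 3 := by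
  obtain ⟨x, y, h1, h2, h3⟩ := ex3walk hsrg hconn hd hc hirr hne hna
  let p : (_root_.bipartiteDoubleCover G).Walk (Sum.inl u) (Sum.inr v) :=
    Walk.cons ((bdc_adj_lr G).mpr h1) (Walk.cons ((bdc_adj_rl G).mpr h2)
      (Walk.cons ((bdc_adj_lr G).mpr h3) Walk.nil))
  have hle : (_root_.bipartiteDoubleCover G).dist (Sum.inl u) (Sum.inr v) ≤ 3 := by
    have := SimpleGraph.dist_le p
    simpa [p] using this
  have hr : (_root_.bipartiteDoubleCover G).Reachable (Sum.inl u) (Sum.inr v) := ⟨p⟩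
  obtain ⟨q, hq⟩ := hr.exists_walk_length_eq_dist
  have hodd : ¬ Even q.length := bdc_odd_lr G q
  have h1' : (_root_.bipartiteDoubleCover G).dist (Sum.inl u) (Sum.inr v) ≠ 1 := by
    intro h'
    exact hna ((bdc_adj_lr G).mp (SimpleGraph.dist_eq_one_iff_adj.mp h'))
  rw [Nat.even_iff] at hodd
  omega

lemma dist_lr_self (hsrg : G.IsSRGWith n d 0 c) (hconn : G.Connected) (hd : 3 ≤ d) (hc : 0 < c)
    (hirr : ∀ v w : V, G.neighborSet v = G.neighborSet w → v = w) (u : V) :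
    (_root_.bipartiteDoubleCover G).dist (Sum.inl u) (Sum.inr u) = 5 := by
  have hdeg : (G.neighborFinset u).card = d := by simpa using hsrg.regular u
  have hnon : (G.neighborFinset u).Nonempty := by rw [← Finset.card_pos]; omega
  obtain ⟨v, hv⟩ := hnon
  rw [mem_neighborFinset] at hv
  obtain ⟨x, w, z, h1, h2, h3, h4⟩ := ex4walk hsrg hconn hd hc hirr hv
  let p : (_root_.bipartiteDoubleCover G).Walk (Sum.inl u) (Sum.inr u) :=
    Walk.cons ((bdc_adj_lr G).mpr h1) (Walk.cons ((bdc_adj_rl G).mpr h2)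
      (Walk.cons ((bdc_adj_lr G).mpr h3) (Walk.cons ((bdc_adj_rl G).mpr h4)
        (Walk.cons ((bdc_adj_lr G).mpr hv.symm) Walk.nil))))
  have hle : (_root_.bipartiteDoubleCover G).dist (Sum.inl u) (Sum.inr u) ≤ 5 := by
    have := SimpleGraph.dist_le p
    simpa [p] using this
  have hr : (_root_.bipartiteDoubleCover G).Reachable (Sum.inl u) (Sum.inr u) := ⟨p⟩
  obtain ⟨q, hq⟩ := hr.exists_walk_length_eq_dist
  have hodd : ¬ Even q.length := bdc_odd_lr G q
  have h1' : (_root_.bipartiteDoubleCover G).dist (Sum.inl u) (Sum.inr u) ≠ 1 := by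
    intro h'
    exact G.irrefl ((bdc_adj_lr G).mp (SimpleGraph.dist_eq_one_iff_adj.mp h'))
  have h3' : (_root_.bipartiteDoubleCover G).dist (Sum.inl u) (Sum.inr u) ≠ 3 := by
    intro h'
    rw [h'] at hq
    have ha1 := q.adj_getVert_succ (i := 0) (by omega)
    have ha2 := q.adj_getVert_succ (i := 1) (by omega)
    have ha3 := q.adj_getVert_succ (i := 2) (by omega)
    rw [q.getVert_zero] at ha1
    have hgl : q.getVert 3 = Sum.inr u := by
      have := q.getVert_length
      rwa [hq] at this
    rw [hgl] at ha3
    rcases hm1 : q.getVert 1 with x' | x'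
    · rw [hm1] at ha1
      exact bdc_not_adj_ll G ha1
    · rcases hm2 : q.getVert 2 with y' | y'
      · rw [hm1] at ha1
        rw [hm1, hm2] at ha2
        rw [hm2] at ha3
        have e1 : G.Adj u x' := (bdc_adj_lr G).mp ha1
        have e2 : G.Adj x' y' := (bdc_adj_rl G).mp ha2
        have e3 : G.Adj y' u := (bdc_adj_lr G).mp ha3
        exact triFree hsrg e2 e1.symm e3
      · rw [hm2] at ha3
        exact bdc_not_adj_rr G ha3
  rw [Nat.even_iff] at hodd
  omega

end Dist

section Spec
variable {V : Type*} [Fintype V] [DecidableEq V] {G : SimpleGraph V} [DecidableRel G.Adj]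
  {n d c : ℕ}

lemma colSum (hsrg : G.IsSRGWith n d 0 c) (t : V → ℝ) :
    ∑ v : V, ∑ w : V, (if G.Adj v w then t w else 0) = d * ∑ w : V, t w := by
  rw [Finset.sum_comm]
  have h1 : ∀ w : V, ∑ v : V, (if G.Adj v w then t w else 0) = (d : ℝ) * t w := by
    intro w
    rw [← Finset.sum_filter]
    rw [Finset.sum_const]
    have hfil : (Finset.univ.filter fun v => G.Adj v w) = G.neighborFinset w := by
      ext v
      simp [mem_neighborFinset, adj_comm]
    rw [hfil]
    have hdeg : (G.neighborFinset w).card = d := by simpa using hsrg.regular w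
    rw [hdeg, nsmul_eq_mul]
  rw [Finset.sum_congr rfl fun w _ => h1 w, ← Finset.mul_sum]

lemma countCommon (hsrg : G.IsSRGWith n d 0 c) (v z : V) :
    (((Finset.univ : Finset V).filter fun w => G.Adj v w ∧ G.Adj w z).card : ℝ) =
      if z = v then (d : ℝ) else if G.Adj v z then 0 else c := by
  rcases eq_or_ne z v with rfl | hne
  · have hfil : ((Finset.univ : Finset V).filter fun w => G.Adj z w ∧ G.Adj w z)
        = G.neighborFinset z := by
      ext w
      simp only [Finset.mem_filter, Finset.mem_univ, true_and, mem_neighborFinset]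
      constructor
      · exact fun h => h.1
      · exact fun h => ⟨h, h.symm⟩
    rw [if_pos rfl, hfil]
    have hdeg : (G.neighborFinset z).card = d := by simpa using hsrg.regular z
    rw [hdeg]
  · have hfil : ((Finset.univ : Finset V).filter fun w => G.Adj v w ∧ G.Adj w z)
        = G.neighborFinset v ∩ G.neighborFinset z := by
      ext w
      simp only [Finset.mem_filter, Finset.mem_univ, true_and, Finset.mem_inter,
        mem_neighborFinset]
      constructor
      · exact fun h => ⟨h.1, h.2.symm⟩
      · exact fun h => ⟨h.1, h.2.symm⟩
    rw [if_neg hne, hfil]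
    by_cases hadj : G.Adj v z
    · rw [if_pos hadj, cardCommonAdj hsrg hadj]
      norm_num
    · rw [if_neg hadj, cardCommon hsrg hne.symm hadj]

lemma adjSpec (hsrg : G.IsSRGWith n d 0 c) (t : V → ℝ) (ν : ℝ)
    (heig : ∀ v, (∑ w : V, if G.Adj v w then t w else 0) = ν * t v)
    (hT : ∑ v : V, t v = 0) {v₀ : V} (ht : t v₀ ≠ 0) :
    ν ^ 2 + c * ν - ((d : ℝ) - c) = 0 := by
  -- second application of the adjacency operator at v₀
  have key : ∑ w : V, (if G.Adj v₀ w then (∑ z : V, if G.Adj w z then t z else 0) else 0)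
      = (d : ℝ) * t v₀ - c * t v₀ - c * (ν * t v₀) := by
    have step1 : ∑ w : V, (if G.Adj v₀ w then (∑ z : V, if G.Adj w z then t z else 0) else 0)
        = ∑ w : V, ∑ z : V, (if G.Adj v₀ w ∧ G.Adj w z then t z else 0) := by
      refine Finset.sum_congr rfl fun w _ => ?_
      by_cases h : G.Adj v₀ w
      · simp only [if_pos h]
        refine Finset.sum_congr rfl fun z _ => ?_
        by_cases h2 : G.Adj w z
        · rw [if_pos h2, if_pos ⟨h, h2⟩]
        · rw [if_neg h2, if_neg (fun hh => h2 hh.2)]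
      · simp only [if_neg h]
        rw [eq_comm, Finset.sum_eq_zero]
        intro z _
        rw [if_neg (fun hh => h hh.1)]
    rw [step1, Finset.sum_comm]
    have step2 : ∀ z : V, ∑ w : V, (if G.Adj v₀ w ∧ G.Adj w z then t z else 0)
        = (if z = v₀ then (d : ℝ) else if G.Adj v₀ z then 0 else c) * t z := by
      intro z
      rw [← Finset.sum_filter, Finset.sum_const, nsmul_eq_mul, countCommon hsrg]
    rw [Finset.sum_congr rfl fun z _ => step2 z]
    have step3 : ∀ z : V,
        (if z = v₀ then (d : ℝ) else if G.Adj v₀ z then 0 else c) * t z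
        = c * t z + ((d : ℝ) - c) * (if z = v₀ then t z else 0)
          - c * (if G.Adj v₀ z then t z else 0) := by
      intro z
      by_cases h1 : z = v₀
      · subst h1
        rw [if_pos rfl, if_pos rfl, if_neg (G.irrefl)]
        ring
      · rw [if_neg h1, if_neg h1]
        by_cases h2 : G.Adj v₀ z
        · rw [if_pos h2, if_pos h2]; ring
        · rw [if_neg h2, if_neg h2]; ring
    rw [Finset.sum_congr rfl fun z _ => step3 z]
    rw [Finset.sum_sub_distrib, Finset.sum_add_distrib, ← Finset.mul_sum, hT,
      ← Finset.mul_sum, ← Finset.mul_sum]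
    rw [Finset.sum_ite_eq' Finset.univ v₀ t, if_pos (Finset.mem_univ v₀), heig v₀]
    ring
  have lhs2 : ∑ w : V, (if G.Adj v₀ w then (∑ z : V, if G.Adj w z then t z else 0) else 0)
      = ν * (ν * t v₀) := by
    have : ∀ w : V, (if G.Adj v₀ w then (∑ z : V, if G.Adj w z then t z else 0) else 0)
        = ν * (if G.Adj v₀ w then t w else 0) := by
      intro w
      by_cases h : G.Adj v₀ w
      · rw [if_pos h, if_pos h, heig w]
      · rw [if_neg h, if_neg h, mul_zero]
    rw [Finset.sum_congr rfl fun w _ => this w, ← Finset.mul_sum, heig v₀]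
  rw [lhs2] at key
  have := mul_right_cancel₀ ht (show (ν * ν) * t v₀ = (((d:ℝ) - c) - c * ν) * t v₀ by
    rw [mul_assoc]; rw [key]; ring)
  nlinarith [this]

end Spec

section Entry
variable {V : Type*} [Fintype V] [DecidableEq V] {G : SimpleGraph V} [DecidableRel G.Adj]
  {n d c : ℕ}

variable (hsrg : G.IsSRGWith n d 0 c) (hconn : G.Connected) (hd : 3 ≤ d) (hc : 0 < c)
  (hirr : ∀ v w : V, G.neighborSet v = G.neighborSet w → v = w)

include hsrg hconn hd hc hirr

lemma entryR_ll (v w : V) : distMatrix (_root_.bipartiteDoubleCover G) (Sum.inl v) (Sum.inl w)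
    = if v = w then 0 else if G.Adj v w then 4 else 2 := by
  rcases eq_or_ne v w with rfl | hne
  · simp [distMatrix]
  · by_cases hadj : G.Adj v w
    · rw [if_neg hne, if_pos hadj]
      simp only [distMatrix, Matrix.of_apply]
      rw [dist_ll_adj hsrg hconn hd hc hirr hadj]
      norm_num
    · rw [if_neg hne, if_neg hadj]
      simp only [distMatrix, Matrix.of_apply]
      rw [dist_ll_two hsrg hc hne hadj]
      norm_num

lemma entryR_rr (v w : V) : distMatrix (_root_.bipartiteDoubleCover G) (Sum.inr v) (Sum.inr w)
    = if v = w then 0 else if G.Adj v w then 4 else 2 := by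
  rcases eq_or_ne v w with rfl | hne
  · simp [distMatrix]
  · by_cases hadj : G.Adj v w
    · rw [if_neg hne, if_pos hadj]
      simp only [distMatrix, Matrix.of_apply]
      rw [dist_rr_adj hsrg hconn hd hc hirr hadj]
      norm_num
    · rw [if_neg hne, if_neg hadj]
      simp only [distMatrix, Matrix.of_apply]
      rw [dist_rr_two hsrg hc hne hadj]
      norm_num

lemma entryR_lr (v w : V) : distMatrix (_root_.bipartiteDoubleCover G) (Sum.inl v) (Sum.inr w)
    = if v = w then 5 else if G.Adj v w then 1 else 3 := by
  rcases eq_or_ne v w with rfl | hne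
  · rw [if_pos rfl]
    simp only [distMatrix, Matrix.of_apply]
    rw [dist_lr_self hsrg hconn hd hc hirr v]
    norm_num
  · by_cases hadj : G.Adj v w
    · rw [if_neg hne, if_pos hadj]
      simp only [distMatrix, Matrix.of_apply]
      rw [dist_lr_adj hadj]
      norm_num
    · rw [if_neg hne, if_neg hadj]
      simp only [distMatrix, Matrix.of_apply]
      rw [dist_lr_nonadj hsrg hconn hd hc hirr hne hadj]
      norm_num

lemma entryR_rl (v w : V) : distMatrix (_root_.bipartiteDoubleCover G) (Sum.inr v) (Sum.inl w)
    = if v = w then 5 else if G.Adj v w then 1 else 3 := by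
  have h := entryR_lr hsrg hconn hd hc hirr w v
  simp only [distMatrix, Matrix.of_apply] at h ⊢
  rw [SimpleGraph.dist_comm] at h
  rw [h]
  rcases eq_or_ne v w with rfl | hne
  · simp
  · rw [if_neg hne.symm, if_neg hne]
    by_cases hadj : G.Adj v w
    · rw [if_pos hadj.symm, if_pos hadj]
    · rw [if_neg (fun hh => hadj hh.symm), if_neg hadj]

end Entry

open Polynomial

theorem stmt17 {V : Type*} [Fintype V] [DecidableEq V] (G : SimpleGraph V)
    [DecidableRel G.Adj] (n d c : ℕ)
    (hd : 3 ≤ d) (hc : 0 < c)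
    (hconn : G.Connected) (hsrg : G.IsSRGWith n d 0 c)
    (hirr : ∀ v w : V, G.neighborSet v = G.neighborSet w → v = w)
    (Δ lam₁ lam₂ : ℝ)
    (hΔ : Δ = (c : ℝ) ^ 2 + 4 * ((d : ℝ) - c))
    (hlam₁ : lam₁ = (-(c : ℝ) + Real.sqrt Δ) / 2)
    (hlam₂ : lam₂ = (-(c : ℝ) - Real.sqrt Δ) / 2)
    (μ : ℝ) (hμ : ∃ u : V ⊕ V → ℝ, u ≠ 0 ∧
      (distMatrix (_root_.bipartiteDoubleCover G)).mulVec u = μ • u) :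
    μ ∈ ({5 * (n : ℝ), 4 * lam₁ - 4, 4 * lam₂ - 4, 0,
      4 * (d : ℝ) - n - 4} : Set ℝ) := by
  obtain ⟨u0, hne0, heq⟩ := hμ
  simp only [Set.mem_insert_iff, Set.mem_singleton_iff]
  have hrow : ∀ a : V ⊕ V,
      (∑ w : V, distMatrix (_root_.bipartiteDoubleCover G) a (Sum.inl w) * u0 (Sum.inl w)) +
      (∑ w : V, distMatrix (_root_.bipartiteDoubleCover G) a (Sum.inr w) * u0 (Sum.inr w))
      = μ * u0 a := by
    intro a
    have h := congrFun heq a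
    simpa [Matrix.mulVec, dotProduct, Fintype.sum_sum_type] using h
  have key1 : ∀ v : V,
      (∑ w : V, (if v = w then (0:ℝ) else if G.Adj v w then 4 else 2) * u0 (Sum.inl w)) +
      (∑ w : V, (if v = w then (5:ℝ) else if G.Adj v w then 1 else 3) * u0 (Sum.inr w))
      = μ * u0 (Sum.inl v) := by
    intro v
    have h := hrow (Sum.inl v)
    simp only [entryR_ll hsrg hconn hd hc hirr, entryR_lr hsrg hconn hd hc hirr] at h
    exact h
  have key2 : ∀ v : V,
      (∑ w : V, (if v = w then (5:ℝ) else if G.Adj v w then 1 else 3) * u0 (Sum.inl w)) +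
      (∑ w : V, (if v = w then (0:ℝ) else if G.Adj v w then 4 else 2) * u0 (Sum.inr w))
      = μ * u0 (Sum.inr v) := by
    intro v
    have h := hrow (Sum.inr v)
    simp only [entryR_rl hsrg hconn hd hc hirr, entryR_rr hsrg hconn hd hc hirr] at h
    exact h
  have hS : ∀ v : V, 5 * (∑ w : V, (u0 (Sum.inl w) + u0 (Sum.inr w)))
      = μ * (u0 (Sum.inl v) + u0 (Sum.inr v)) := by
    intro v
    have k1 := key1 v
    have k2 := key2 v
    have hcomb : 5 * (∑ w : V, (u0 (Sum.inl w) + u0 (Sum.inr w)))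
        = μ * u0 (Sum.inl v) + μ * u0 (Sum.inr v) := by
      rw [← k1, ← k2, Finset.mul_sum, ← Finset.sum_add_distrib, ← Finset.sum_add_distrib,
        ← Finset.sum_add_distrib]
      exact Finset.sum_congr rfl fun w _ => by split_ifs <;> ring
    rw [hcomb]; ring
  have hTv : ∀ v : V,
      4 * (∑ w : V, if G.Adj v w then (u0 (Sum.inl w) - u0 (Sum.inr w)) else 0)
      - (∑ w : V, (u0 (Sum.inl w) - u0 (Sum.inr w)))
      - 4 * (u0 (Sum.inl v) - u0 (Sum.inr v))
      = μ * (u0 (Sum.inl v) - u0 (Sum.inr v)) := by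
    intro v
    have k1 := key1 v
    have k2 := key2 v
    have hsum2 : ∑ w : V,
        ((if v = w then (0:ℝ) else if G.Adj v w then 4 else 2) * u0 (Sum.inl w) +
         (if v = w then (5:ℝ) else if G.Adj v w then 1 else 3) * u0 (Sum.inr w) -
         ((if v = w then (5:ℝ) else if G.Adj v w then 1 else 3) * u0 (Sum.inl w) +
          (if v = w then (0:ℝ) else if G.Adj v w then 4 else 2) * u0 (Sum.inr w)))
        = μ * (u0 (Sum.inl v) - u0 (Sum.inr v)) := by
      rw [Finset.sum_sub_distrib, Finset.sum_add_distrib, Finset.sum_add_distrib, k1, k2]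
      ring
    have hsum3 : ∑ w : V,
        ((if v = w then (0:ℝ) else if G.Adj v w then 4 else 2) * u0 (Sum.inl w) +
         (if v = w then (5:ℝ) else if G.Adj v w then 1 else 3) * u0 (Sum.inr w) -
         ((if v = w then (5:ℝ) else if G.Adj v w then 1 else 3) * u0 (Sum.inl w) +
          (if v = w then (0:ℝ) else if G.Adj v w then 4 else 2) * u0 (Sum.inr w)))
        = 4 * (∑ w : V, if G.Adj v w then (u0 (Sum.inl w) - u0 (Sum.inr w)) else 0)
          - (∑ w : V, (u0 (Sum.inl w) - u0 (Sum.inr w)))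
          - 4 * (u0 (Sum.inl v) - u0 (Sum.inr v)) := by
      have hpt : ∀ w : V,
          ((if v = w then (0:ℝ) else if G.Adj v w then 4 else 2) * u0 (Sum.inl w) +
           (if v = w then (5:ℝ) else if G.Adj v w then 1 else 3) * u0 (Sum.inr w) -
           ((if v = w then (5:ℝ) else if G.Adj v w then 1 else 3) * u0 (Sum.inl w) +
            (if v = w then (0:ℝ) else if G.Adj v w then 4 else 2) * u0 (Sum.inr w)))
          = 4 * (if G.Adj v w then (u0 (Sum.inl w) - u0 (Sum.inr w)) else 0)
            - (u0 (Sum.inl w) - u0 (Sum.inr w))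
            - 4 * (if v = w then (u0 (Sum.inl w) - u0 (Sum.inr w)) else 0) := by
        intro w
        split_ifs with h1 h2 <;> try ring
        exact absurd (h1 ▸ h2) G.irrefl
      rw [Finset.sum_congr rfl fun w _ => hpt w]
      rw [Finset.sum_sub_distrib, Finset.sum_sub_distrib, ← Finset.mul_sum, ← Finset.mul_sum]
      rw [Finset.sum_ite_eq Finset.univ v (fun w => u0 (Sum.inl w) - u0 (Sum.inr w)),
        if_pos (Finset.mem_univ v)]
    rw [← hsum3]
    exact hsum2
  by_cases hScase : ∀ v : V, u0 (Sum.inl v) + u0 (Sum.inr v) = 0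
  · -- s ≡ 0, use t
    have htne : ∃ v : V, u0 (Sum.inl v) - u0 (Sum.inr v) ≠ 0 := by
      by_contra hco
      push_neg at hco
      apply hne0
      funext a
      rcases a with v | v
      · have h1 := hScase v
        have h2 := hco v
        simp only [Pi.zero_apply]
        linarith
      · have h1 := hScase v
        have h2 := hco v
        simp only [Pi.zero_apply]
        linarith
    obtain ⟨v₀, htv₀⟩ := htne
    by_cases hT0 : (∑ v : V, (u0 (Sum.inl v) - u0 (Sum.inr v))) = 0
    · -- genuine adjacency eigenvector case
      have heig : ∀ v : V,
          (∑ w : V, if G.Adj v w then (u0 (Sum.inl w) - u0 (Sum.inr w)) else 0)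
          = ((μ + 4) / 4) * (u0 (Sum.inl v) - u0 (Sum.inr v)) := by
        intro v
        have h := hTv v
        rw [hT0] at h
        linear_combination (1/4 : ℝ) * h
      have hquad := adjSpec hsrg (fun w => u0 (Sum.inl w) - u0 (Sum.inr w)) ((μ + 4) / 4)
        heig hT0 htv₀
      have hdelta : (2 * ((μ + 4) / 4) + (c:ℝ)) ^ 2 = Δ := by
        rw [hΔ]; linear_combination 4 * hquad
      have habs : Real.sqrt Δ = |2 * ((μ + 4) / 4) + (c:ℝ)| := by
        rw [← hdelta, Real.sqrt_sq_eq_abs]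
      rcases abs_cases (2 * ((μ + 4) / 4) + (c:ℝ)) with ⟨heq2, _⟩ | ⟨heq2, _⟩
      · right; left
        rw [hlam₁, habs, heq2]; ring
      · right; right; left
        rw [hlam₂, habs, heq2]; ring
    · -- T ≠ 0 : μ = 4d - n - 4
      right; right; right; right
      have hsumT : ∑ v : V,
          (4 * (∑ w : V, if G.Adj v w then (u0 (Sum.inl w) - u0 (Sum.inr w)) else 0)
          - (∑ w : V, (u0 (Sum.inl w) - u0 (Sum.inr w)))
          - 4 * (u0 (Sum.inl v) - u0 (Sum.inr v)))
          = ∑ v : V, μ * (u0 (Sum.inl v) - u0 (Sum.inr v)) :=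
        Finset.sum_congr rfl fun v _ => hTv v
      rw [Finset.sum_sub_distrib, Finset.sum_sub_distrib, ← Finset.mul_sum, ← Finset.mul_sum,
        ← Finset.mul_sum, colSum hsrg, Finset.sum_const, Finset.card_univ, hsrg.card,
        nsmul_eq_mul] at hsumT
      have hfin : (4 * (d:ℝ) - n - 4) * (∑ v : V, (u0 (Sum.inl v) - u0 (Sum.inr v)))
          = μ * (∑ v : V, (u0 (Sum.inl v) - u0 (Sum.inr v))) := by
        linear_combination hsumT
      exact (mul_right_cancel₀ hT0 hfin).symm
  · -- some s v ≠ 0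
    push_neg at hScase
    obtain ⟨v₁, hv₁⟩ := hScase
    by_cases hμ0 : μ = 0
    · right; right; right; left; exact hμ0
    · left
      have hSne : (∑ w : V, (u0 (Sum.inl w) + u0 (Sum.inr w))) ≠ 0 := by
        intro h0
        apply hv₁
        have h := hS v₁
        rw [h0, mul_zero] at h
        rcases mul_eq_zero.mp h.symm with h | h
        · exact absurd h hμ0
        · exact h
      have hsumS : ∑ v : V, (5 * (∑ w : V, (u0 (Sum.inl w) + u0 (Sum.inr w))))
          = ∑ v : V, μ * (u0 (Sum.inl v) + u0 (Sum.inr v)) :=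
        Finset.sum_congr rfl fun v _ => hS v
      rw [Finset.sum_const, Finset.card_univ, hsrg.card, nsmul_eq_mul,
        ← Finset.mul_sum] at hsumS
      have hfin : (5 * (n:ℝ)) * (∑ w : V, (u0 (Sum.inl w) + u0 (Sum.inr w)))
          = μ * (∑ w : V, (u0 (Sum.inl w) + u0 (Sum.inr w))) := by
        linear_combination hsumS
      exact (mul_right_cancel₀ hSne hfin).symm
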